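/- arXiv:1705.02588 — 5 statements merged into one kernel-verified Lean document; each statement's English description precedes it below -/
import Mathlib

section
/- For α > 0, b ≥ 0, ρ < α + 1, and t > 0, the Sumudu transform of the function t ↦ t^{α−ρ} E_{α, α−ρ+1}(−b t^α) evaluated at u > 0 with b u^α < 1 equals u^{−ρ}/(u^{−α} + b), i.e. ∫₀^∞ e^{-s} (u s)^{α−ρ} E_{α,α−ρ+1}(−b (u s)^α) ds = u^{α−ρ}/(1 + b u^{α}). -/
/-!
Expanding `E_{α,β}` and integrating term by term against `e^{-s}`, the `n`-th term of
`(us)^{β-1} E_{α,β}(c (us)^α)` contributes `c^n u^{nα+β-1}`: Euler's integral for `Γ(nα+β)`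
cancels the Gamma factor of the coefficient. What is left is a geometric series in `c u^α`,
whose absolute convergence for `|c| u^α < 1` also justifies the interchange of sum and integral.
-/

open MeasureTheory Real

/-- Real two-parameter Mittag-Leffler function. -/
noncomputable def mittagLeffler (α β z : ℝ) : ℝ :=
  ∑' n : ℕ, z ^ n / Real.Gamma (n * α + β)

open Set

theorem hasSum_integral_exp_neg_mul_tsum_rpow {c p : ℕ → ℝ} (hp : ∀ n, 0 < p n)
    (hsum : Summable fun n => |c n| * Gamma (p n)) :
    HasSum (fun n => c n * Gamma (p n))
      (∫ s in Ioi 0, exp (-s) * ∑' n, c n * s ^ (p n - 1)) := by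
  set F : ℕ → ℝ → ℝ := fun n s => c n * (exp (-s) * s ^ (p n - 1))
  have hF_int (n : ℕ) : Integrable (F n) (volume.restrict (Ioi 0)) :=
    (GammaIntegral_convergent (hp n)).const_mul _
  have hF_integral (n : ℕ) : ∫ s in Ioi 0, F n s = c n * Gamma (p n) := by
    rw [integral_const_mul, Gamma_eq_integral (hp n)]
  have hF_norm_integral (n : ℕ) : ∫ s in Ioi 0, ‖F n s‖ = |c n| * Gamma (p n) := by
    rw [Gamma_eq_integral (hp n), ← integral_const_mul]
    refine setIntegral_congr_fun measurableSet_Ioi fun s (hs : 0 < s) => ?_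
    rw [norm_eq_abs, abs_mul, abs_of_nonneg (by positivity : 0 ≤ exp (-s) * s ^ (p n - 1))]
  have hF_sum (s : ℝ) : exp (-s) * ∑' n, c n * s ^ (p n - 1) = ∑' n, F n s := by
    rw [← tsum_mul_left]
    exact tsum_congr fun n => mul_left_comm _ _ _
  simp_rw [hF_sum, ← hF_integral]
  exact hasSum_integral_of_summable_integral_norm hF_int (by simpa only [hF_norm_integral])

theorem rpow_natCast_mul_add {x : ℝ} (hx : 0 < x) (n : ℕ) (α β : ℝ) :
    x ^ (n * α + β) = (x ^ α) ^ n * x ^ β := by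
  rw [← rpow_mul_natCast hx.le, ← rpow_add hx, mul_comm α]

theorem rpow_sub_one_mul_mittagLeffler (α β c : ℝ) {x : ℝ} (hx : 0 < x) :
    x ^ (β - 1) * mittagLeffler α β (c * x ^ α)
      = ∑' n : ℕ, c ^ n / Gamma (n * α + β) * x ^ (n * α + β - 1) := by
  rw [mittagLeffler, ← tsum_mul_left]
  refine tsum_congr fun n => ?_
  rw [add_sub_assoc, rpow_natCast_mul_add hx, mul_pow]
  ring

theorem hasSum_sumudu_rpow_mul_mittagLeffler {α β c u : ℝ} (hα : 0 ≤ α) (hβ : 0 < β)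
    (hu : 0 < u) (hcu : |c| * u ^ α < 1) :
    HasSum (fun n : ℕ => u ^ (β - 1) * (c * u ^ α) ^ n)
      (∫ s in Ioi 0, exp (-s) * (u * s) ^ (β - 1) * mittagLeffler α β (c * (u * s) ^ α)) := by
  have hp (n : ℕ) : 0 < n * α + β := by positivity
  have hgeom (x : ℝ) (n : ℕ) :
      x ^ n * u ^ (n * α + β - 1) = u ^ (β - 1) * (x * u ^ α) ^ n := by
    rw [add_sub_assoc, rpow_natCast_mul_add hu, mul_pow]
    ring
  set a : ℕ → ℝ := fun n => c ^ n / Gamma (n * α + β) * u ^ (n * α + β - 1)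
  have ha (n : ℕ) : a n * Gamma (n * α + β) = u ^ (β - 1) * (c * u ^ α) ^ n := by
    rw [← hgeom]
    simp only [a]
    rw [div_mul_eq_mul_div, div_mul_cancel₀ _ (Gamma_pos_of_pos (hp n)).ne']
  have ha_abs (n : ℕ) : |a n| * Gamma (n * α + β) = u ^ (β - 1) * (|c| * u ^ α) ^ n := by
    rw [← abs_of_pos (Gamma_pos_of_pos (hp n)), ← abs_mul, ha, abs_mul, abs_pow, abs_mul,
      abs_of_pos (rpow_pos_of_pos hu _), abs_of_pos (rpow_pos_of_pos hu _)]
  have hexpand : ∀ s ∈ Ioi (0 : ℝ),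
      exp (-s) * (u * s) ^ (β - 1) * mittagLeffler α β (c * (u * s) ^ α)
        = exp (-s) * ∑' n : ℕ, a n * s ^ (n * α + β - 1) := by
    intro s (hs : 0 < s)
    rw [mul_assoc, rpow_sub_one_mul_mittagLeffler α β c (mul_pos hu hs)]
    refine congrArg _ (tsum_congr fun n => ?_)
    rw [mul_rpow hu.le hs.le]
    ring
  have hsummable : Summable fun n => |a n| * Gamma (n * α + β) := by
    simpa only [ha_abs] using (summable_geometric_of_lt_one (by positivity) hcu).mul_left _
  rw [setIntegral_congr_fun measurableSet_Ioi hexpand]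
  simpa only [ha] using hasSum_integral_exp_neg_mul_tsum_rpow hp hsummable

theorem sumudu_rpow_mul_mittagLeffler {α β c u : ℝ} (hα : 0 ≤ α) (hβ : 0 < β)
    (hu : 0 < u) (hcu : |c| * u ^ α < 1) :
    ∫ s in Ioi 0, exp (-s) * (u * s) ^ (β - 1) * mittagLeffler α β (c * (u * s) ^ α)
      = u ^ (β - 1) / (1 - c * u ^ α) := by
  have hcu' : |c * u ^ α| < 1 := by rwa [abs_mul, abs_of_pos (rpow_pos_of_pos hu α)]
  refine (hasSum_sumudu_rpow_mul_mittagLeffler hα hβ hu hcu).unique ?_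
  rw [div_eq_mul_inv]
  exact (hasSum_geometric_of_abs_lt_one hcu').mul_left _

theorem sumudu_mittagLeffler (α b ρ u : ℝ) (hα : 0 < α) (hb : 0 ≤ b)
    (hρ : ρ < α + 1) (hu : 0 < u) (hbu : b * u ^ α < 1) :
    ∫ s in Set.Ioi (0 : ℝ),
      Real.exp (-s) * (u * s) ^ (α - ρ) * mittagLeffler α (α - ρ + 1) (-b * (u * s) ^ α)
      = u ^ (α - ρ) / (1 + b * u ^ α) := by
  have h := sumudu_rpow_mul_mittagLeffler (c := -b) hα.le (by linarith : 0 < α - ρ + 1) hu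
    (by rwa [abs_neg, abs_of_nonneg hb])
  simpa only [add_sub_cancel_right, neg_mul, sub_neg_eq_add] using h
end

section
/- (Sumudu convolution theorem) For f, g : [0,∞) → ℝ integrable against e^{-t/u}, the Sumudu transform of the convolution (f ∗ g)(t) = ∫₀^t f(ξ) g(t−ξ) dξ satisfies S[f ∗ g](u) = u · S[f](u) · S[g](u) for u > 0. -/
/-!
With the weight `e^{-t/u}` one has `e^{-ξ/u} e^{-(t-ξ)/u} = e^{-t/u}`, so the weighted convolution
of `f` and `g` is the full-line convolution of their weighted, `[0, ∞)`-truncated versions, whose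
integral is the product of the integrals (Fubini). The substitution `t ↦ u t` turns these
weighted integrals into `u` times the Sumudu transforms.
-/

open MeasureTheory Real Convolution Set

noncomputable def sumudu (f : ℝ → ℝ) (u : ℝ) : ℝ :=
  ∫ t in Set.Ioi (0 : ℝ), f (u * t) * Real.exp (-t)

/-- Convolution on [0, ∞): (f ∗ g)(t) = ∫₀^t f(ξ) g(t−ξ) dξ. -/
noncomputable def conv (f g : ℝ → ℝ) (t : ℝ) : ℝ :=
  ∫ ξ in (0 : ℝ)..t, f ξ * g (t - ξ)

noncomputable def expWeighted (u : ℝ) (f : ℝ → ℝ) : ℝ → ℝ :=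
  (Ioi 0).indicator fun t => exp (-(t / u)) * f t

lemma sumudu_eq_inv_mul_integral (f : ℝ → ℝ) {u : ℝ} (hu : 0 < u) :
    sumudu f u = u⁻¹ * ∫ t in Ioi 0, exp (-(t / u)) * f t := by
  have hscale : sumudu f u = ∫ t in Ioi 0, exp (-(u * t / u)) * f (u * t) := by
    unfold sumudu
    congr 1 with t
    rw [mul_comm, mul_div_cancel_left₀ t hu.ne']
  rw [hscale]
  simpa using integral_comp_mul_left_Ioi (fun x => exp (-(x / u)) * f x) 0 hu

lemma exp_neg_div_mul_exp_neg_sub_div (u ξ t : ℝ) :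
    exp (-(ξ / u)) * exp (-((t - ξ) / u)) = exp (-(t / u)) := by
  rw [← exp_add]
  ring_nf

lemma expWeighted_mul_expWeighted_sub (u : ℝ) (f g : ℝ → ℝ) (t ξ : ℝ) :
    expWeighted u f ξ * expWeighted u g (t - ξ)
      = (Ioo 0 t).indicator (fun ξ => exp (-(t / u)) * (f ξ * g (t - ξ))) ξ := by
  unfold expWeighted
  by_cases hξ : 0 < ξ
  · by_cases hξt : ξ < t
    · rw [indicator_of_mem (mem_Ioo.2 ⟨hξ, hξt⟩), indicator_of_mem (mem_Ioi.2 hξ),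
        indicator_of_mem (mem_Ioi.2 (sub_pos.2 hξt)), ← exp_neg_div_mul_exp_neg_sub_div u ξ t]
      ring
    · have hout : t - ξ ∉ Ioi 0 := by simpa using hξt
      have hout' : ξ ∉ Ioo 0 t := fun h => hξt h.2
      rw [indicator_of_notMem hout', indicator_of_notMem hout, mul_zero]
  · have hout : ξ ∉ Ioi 0 := by simpa using hξ
    have hout' : ξ ∉ Ioo 0 t := fun h => hξ h.1
    rw [indicator_of_notMem hout', indicator_of_notMem hout, zero_mul]

lemma expWeighted_convolution (u : ℝ) (f g : ℝ → ℝ) :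
    expWeighted u f ⋆[ContinuousLinearMap.mul ℝ ℝ] expWeighted u g
      = expWeighted u (conv f g) := by
  ext t
  have hIoo : (expWeighted u f ⋆[ContinuousLinearMap.mul ℝ ℝ] expWeighted u g) t
      = ∫ ξ in Ioo 0 t, exp (-(t / u)) * (f ξ * g (t - ξ)) := by
    simp only [convolution_def, ContinuousLinearMap.mul_apply',
      expWeighted_mul_expWeighted_sub]
    exact integral_indicator measurableSet_Ioo
  rw [hIoo, integral_const_mul, expWeighted]
  by_cases ht : 0 < t
  · rw [indicator_of_mem (mem_Ioi.2 ht), conv, intervalIntegral.integral_of_le ht.le,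
      integral_Ioc_eq_integral_Ioo]
  · rw [indicator_of_notMem (by simpa using ht), Ioo_eq_empty (by simpa using ht)]
    simp

lemma integral_Ioi_exp_mul_conv (u : ℝ) {f g : ℝ → ℝ}
    (hf : IntegrableOn (fun t => exp (-(t / u)) * f t) (Ioi 0))
    (hg : IntegrableOn (fun t => exp (-(t / u)) * g t) (Ioi 0)) :
    ∫ t in Ioi 0, exp (-(t / u)) * conv f g t
      = (∫ t in Ioi 0, exp (-(t / u)) * f t) * ∫ t in Ioi 0, exp (-(t / u)) * g t := by
  have hF : Integrable (expWeighted u f) := (integrable_indicator_iff measurableSet_Ioi).2 hf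
  have hG : Integrable (expWeighted u g) := (integrable_indicator_iff measurableSet_Ioi).2 hg
  have hprod := integral_convolution (ContinuousLinearMap.mul ℝ ℝ) hF hG
  rw [expWeighted_convolution] at hprod
  simpa only [expWeighted, integral_indicator measurableSet_Ioi,
    ContinuousLinearMap.mul_apply'] using hprod

theorem sumudu_convolution_general (f g : ℝ → ℝ) (u : ℝ) (hu : 0 < u)
    (hfi : IntegrableOn (fun t => Real.exp (-(t / u)) * f t) (Set.Ioi (0 : ℝ)))
    (hgi : IntegrableOn (fun t => Real.exp (-(t / u)) * g t) (Set.Ioi (0 : ℝ))) :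
    sumudu (conv f g) u = u * sumudu f u * sumudu g u := by
  rw [sumudu_eq_inv_mul_integral _ hu, sumudu_eq_inv_mul_integral f hu,
    sumudu_eq_inv_mul_integral g hu, integral_Ioi_exp_mul_conv u hfi hgi]
  field_simp

theorem sumudu_convolution (f g : ℝ → ℝ) (u : ℝ) (hu : 0 < u)
    (hf : Measurable f) (hg : Measurable g)
    (hfi : IntegrableOn (fun t => Real.exp (-(t / u)) * f t) (Set.Ioi (0 : ℝ)))
    (hgi : IntegrableOn (fun t => Real.exp (-(t / u)) * g t) (Set.Ioi (0 : ℝ))) :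
    sumudu (conv f g) u = u * sumudu f u * sumudu g u :=
  sumudu_convolution_general f g u hu hfi hgi
end

section
/- For 0 < α ≤ 1, f of exponential order, and u > 0 small, the Sumudu transform of the Riemann–Liouville fractional integral I^α f(t) = (1/Γ(α)) ∫₀^t (t−s)^{α−1} f(s) ds satisfies S[I^α f](u) = u^{α} S[f](u). -/
open MeasureTheory Real

/-- Riemann–Liouville fractional integral of order α. -/
noncomputable def rlIntegral (α : ℝ) (f : ℝ → ℝ) (t : ℝ) : ℝ :=
  (1 / Real.Gamma α) * ∫ s in (0 : ℝ)..t, (t - s) ^ (α - 1) * f s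

/-!
Substituting `s ↦ u s` turns the Sumudu transform at `u` of `I^α f` into `u^α` times the
Laplace transform at `1` of `I^α (f (u ·))`. Since `e^{-t} = e^{-(t-s)} e^{-s}`, the function
`(I^α g)(t) e^{-t}` on `t > 0` is `1/Γ(α)` times the convolution of `x^{α-1} e^{-x}` with
`g(s) e^{-s}`, both extended by zero to `ℝ`. The integral of a convolution is the product of the
integrals, and `∫₀^∞ x^{α-1} e^{-x} dx = Γ(α)`.
-/

open Set Convolution ContinuousLinearMap

theorem rlIntegral_comp_mul_left {α u t : ℝ} (f : ℝ → ℝ) (hu : 0 < u) (ht : 0 ≤ t) :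
    u ^ α * rlIntegral α (fun s => f (u * s)) t = rlIntegral α f (u * t) := by
  have hkernel : ∀ x ∈ uIcc 0 t, (u * t - u * x) ^ (α - 1) * f (u * x) =
      u ^ (α - 1) * ((t - x) ^ (α - 1) * f (u * x)) := fun x hx => by
    rw [uIcc_of_le ht] at hx
    rw [← mul_sub, mul_rpow hu.le (sub_nonneg.2 hx.2), mul_assoc]
  have hsubst := intervalIntegral.smul_integral_comp_mul_left
    (fun s => (u * t - s) ^ (α - 1) * f s) u (a := 0) (b := t)
  rw [mul_zero, smul_eq_mul, intervalIntegral.integral_congr hkernel,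
    intervalIntegral.integral_const_mul, rpow_sub_one hu.ne', ← mul_assoc,
    mul_div_cancel₀ _ hu.ne'] at hsubst
  rw [rlIntegral, rlIntegral, ← hsubst]
  ring

theorem integrableOn_mul_exp_neg_of_abs_le {g : ℝ → ℝ} {M c : ℝ} (hg : Measurable g)
    (hbound : ∀ t ≥ 0, |g t| ≤ M * exp (c * t)) (hc : c < 1) :
    IntegrableOn (fun t => g t * exp (-t)) (Ioi 0) := by
  refine ((exp_neg_integrableOn_Ioi 0 (sub_pos.2 hc)).const_mul M).mono'
    (hg.mul (measurable_neg.exp)).aestronglyMeasurable ?_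
  filter_upwards [ae_restrict_mem measurableSet_Ioi] with t ht
  rw [norm_mul, norm_eq_abs, norm_eq_abs, abs_exp]
  calc |g t| * exp (-t) ≤ M * exp (c * t) * exp (-t) := by gcongr; exact hbound t (le_of_lt ht)
    _ = M * exp (-(1 - c) * t) := by rw [mul_assoc, ← exp_add]; ring_nf

noncomputable def expWeight (g : ℝ → ℝ) : ℝ → ℝ :=
  (Ioi 0).indicator fun t => g t * exp (-t)

theorem integrable_expWeight_iff {g : ℝ → ℝ} :
    Integrable (expWeight g) ↔ IntegrableOn (fun t => g t * exp (-t)) (Ioi 0) :=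
  integrable_indicator_iff measurableSet_Ioi

theorem integral_expWeight (g : ℝ → ℝ) :
    ∫ t, expWeight g t = ∫ t in Ioi 0, g t * exp (-t) :=
  integral_indicator measurableSet_Ioi

theorem expWeight_convolution (α : ℝ) (g : ℝ → ℝ) (t : ℝ) :
    (expWeight (· ^ (α - 1)) ⋆[mul ℝ ℝ] expWeight g) t =
      (∫ s in Ioo 0 t, (t - s) ^ (α - 1) * g s) * exp (-t) := by
  have hintegrand : ∀ s, expWeight (· ^ (α - 1)) (t - s) * expWeight g s =
      (Ioo 0 t).indicator (fun s => (t - s) ^ (α - 1) * g s * exp (-t)) s := fun s => by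
    by_cases hs : s ∈ Ioo 0 t
    · have hts : 0 < t - s := sub_pos.2 hs.2
      simp only [expWeight, indicator_of_mem hs, indicator_of_mem (mem_Ioi.2 hs.1),
        indicator_of_mem (mem_Ioi.2 hts)]
      rw [mul_mul_mul_comm, ← exp_add]
      ring_nf
    · rw [indicator_of_notMem hs]
      rcases not_and_or.1 hs with hs | hs
      · simp [expWeight, indicator_of_notMem (show s ∉ Ioi 0 from hs)]
      · simp [expWeight, indicator_of_notMem (show t - s ∉ Ioi 0 by simpa using hs)]
  rw [convolution_mul_swap]
  simp_rw [hintegrand]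
  rw [integral_indicator measurableSet_Ioo, integral_mul_const]

theorem integral_rlIntegral_mul_exp_neg {α : ℝ} (hα : 0 < α) {g : ℝ → ℝ}
    (hg : IntegrableOn (fun t => g t * exp (-t)) (Ioi 0)) :
    ∫ t in Ioi 0, rlIntegral α g t * exp (-t) = ∫ t in Ioi 0, g t * exp (-t) := by
  have hkernel : Integrable (expWeight (· ^ (α - 1))) := by
    simpa only [integrable_expWeight_iff, mul_comm] using GammaIntegral_convergent hα
  have hΓ : ∫ t, expWeight (· ^ (α - 1)) t = Gamma α := by
    simp only [integral_expWeight, Gamma_eq_integral hα, mul_comm]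
  have hconv_eq : ∀ t ∈ Ioi 0, (expWeight (· ^ (α - 1)) ⋆[mul ℝ ℝ] expWeight g) t =
      Gamma α * (rlIntegral α g t * exp (-t)) := fun t ht => by
    rw [expWeight_convolution, ← integral_Ioc_eq_integral_Ioo,
      ← intervalIntegral.integral_of_le (le_of_lt ht), rlIntegral]
    field_simp [(Gamma_pos_of_pos hα).ne']
  have hconv_zero : ∀ t ∉ Ioi 0, (expWeight (· ^ (α - 1)) ⋆[mul ℝ ℝ] expWeight g) t = 0 :=
    fun t ht => by
      rw [expWeight_convolution, Ioo_eq_empty (by simpa using ht), Measure.restrict_empty,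
        integral_zero_measure, zero_mul]
  have h := integral_convolution (mul ℝ ℝ) hkernel (integrable_expWeight_iff.2 hg)
  rw [← setIntegral_eq_integral_of_forall_compl_eq_zero hconv_zero,
    setIntegral_congr_fun measurableSet_Ioi hconv_eq, integral_const_mul, hΓ,
    integral_expWeight, mul_apply', mul_left_cancel_iff_of_pos (Gamma_pos_of_pos hα)] at h
  exact h

theorem sumudu_rlIntegral_general (α : ℝ) (f : ℝ → ℝ) (M τ u : ℝ)
    (hα : 0 < α)
    (hf : Measurable f)
    (hbound : ∀ t ≥ (0 : ℝ), |f t| ≤ M * Real.exp (t / τ))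
    (hu : 0 < u) (huτ : u < τ) :
    sumudu (rlIntegral α f) u = u ^ α * sumudu f u := by
  have hτ : 0 < τ := hu.trans huτ
  have hint : IntegrableOn (fun t => f (u * t) * exp (-t)) (Ioi 0) :=
    integrableOn_mul_exp_neg_of_abs_le (hf.comp (measurable_const_mul u))
      (fun t ht => by simpa only [mul_div_right_comm] using hbound (u * t) (by positivity))
      ((div_lt_one hτ).2 huτ)
  calc sumudu (rlIntegral α f) u
      = ∫ t in Ioi 0, u ^ α * (rlIntegral α (fun s => f (u * s)) t * exp (-t)) :=
        setIntegral_congr_fun measurableSet_Ioi fun t ht => by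
          rw [← rlIntegral_comp_mul_left f hu (le_of_lt ht), mul_assoc]
    _ = u ^ α * sumudu f u := by
        rw [integral_const_mul, integral_rlIntegral_mul_exp_neg hα hint, sumudu]

theorem sumudu_rlIntegral (α : ℝ) (f : ℝ → ℝ) (M τ u : ℝ)
    (hα : 0 < α) (hα1 : α ≤ 1)
    (hf : Measurable f) (hM : 0 < M) (hτ : 0 < τ)
    (hbound : ∀ t ≥ (0 : ℝ), |f t| ≤ M * Real.exp (t / τ))
    (hu : 0 < u) (huτ : u < τ) :
    sumudu (rlIntegral α f) u = u ^ α * sumudu f u :=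
  sumudu_rlIntegral_general α f M τ u hα hf hbound hu huτ
end

section
/- For b ≥ 0, λ ≥ 0, α > β > 0, and s > 0 sufficiently large, the function f(t) = Σ_{r=0}^∞ (−λ)^r t^{(α−β)r+α−1} E^{r+1}_{α, α+(α−β)r}(−b t^α) satisfies L[f](s) = 1/(s^α + λ s^β + b), where L is the Laplace transform. -/
open MeasureTheory Real

/-- Real three-parameter (Prabhakar) Mittag-Leffler function. -/
noncomputable def mittagLeffler3 (α β δ z : ℝ) : ℝ :=
  ∑' n : ℕ, (ascPochhammer ℝ n).eval δ * z ^ n / (Real.Gamma (n * α + β) * n.factorial)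

/-!
Expanding each Mittag-Leffler function, the series becomes a double series
`∑_{r,n} c_{r,n} t^{e_{r,n} - 1}` with `e_{r,n} = (α - β) r + α + α n` and
`c_{r,n} = (-λ)^r (-b)^n C(r+n, r) / Γ(e_{r,n})`, because `(r+1)_n = n! C(r+n, r)`.
Since `∫₀^∞ e^{-st} t^{e-1} dt = Γ(e) / s^e`, integrating termwise gives
`s^{-α} ∑_{r,n} C(r+n, r) x^r y^n = s^{-α} / (1 - x - y)` with `x = -λ s^{β-α}`, `y = -b s^{-α}`,
the two-variable geometric series, which is `1 / (s^α + λ s^β + b)`.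
The hypothesis `λ s^β + b < s^α` says `|x| + |y| < 1`: it makes the double series of the
absolute values of the Laplace transforms converge, which justifies the interchange of sum and
integral and, a posteriori, the a.e. convergence of the double series itself.
-/

section DoubleGeometric

open Finset

theorem hasSum_antidiagonal_choose_mul_pow_mul_pow {R : Type*} [CommSemiring R]
    [TopologicalSpace R] (x y : R) (m : ℕ) :
    HasSum (fun p : antidiagonal m =>
      ((p.1.1 + p.1.2).choose p.1.1 : R) * x ^ p.1.1 * y ^ p.1.2) ((x + y) ^ m) := by
  have hbinom : ∑ p ∈ antidiagonal m, ((p.1 + p.2).choose p.1 : R) * x ^ p.1 * y ^ p.2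
      = (x + y) ^ m := by
    rw [(Commute.all x y).add_pow']
    refine sum_congr rfl fun p hp => ?_
    rw [mem_antidiagonal.1 hp, nsmul_eq_mul, mul_assoc]
  rw [← hbinom, ← sum_coe_sort]
  exact hasSum_fintype _

theorem summable_choose_mul_pow_mul_pow_of_nonneg {x y : ℝ} (hx : 0 ≤ x) (hy : 0 ≤ y)
    (h : x + y < 1) :
    Summable fun p : ℕ × ℕ => ((p.1 + p.2).choose p.1 : ℝ) * x ^ p.1 * y ^ p.2 := by
  rw [← HasAntidiagonal.sigmaAntidiagonalEquivProd.summable_iff,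
    summable_sigma_of_nonneg fun p => by dsimp only [Function.comp_apply]; positivity]
  refine ⟨fun m => (hasSum_antidiagonal_choose_mul_pow_mul_pow x y m).summable, ?_⟩
  simp only [Function.comp_apply, HasAntidiagonal.sigmaAntidiagonalEquivProd_apply,
    (hasSum_antidiagonal_choose_mul_pow_mul_pow x y _).tsum_eq]
  exact summable_geometric_of_lt_one (by positivity) h

theorem hasSum_choose_mul_pow_mul_pow {𝕜 : Type*} [NormedField 𝕜] [CompleteSpace 𝕜] {x y : 𝕜}
    (h : ‖x‖ + ‖y‖ < 1) :
    HasSum (fun p : ℕ × ℕ => ((p.1 + p.2).choose p.1 : 𝕜) * x ^ p.1 * y ^ p.2) (1 - x - y)⁻¹ := by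
  have hsum : Summable fun p : ℕ × ℕ => ((p.1 + p.2).choose p.1 : 𝕜) * x ^ p.1 * y ^ p.2 := by
    refine (summable_choose_mul_pow_mul_pow_of_nonneg (norm_nonneg x) (norm_nonneg y) h
      ).of_norm_bounded fun p => ?_
    rw [norm_mul, norm_mul, norm_pow, norm_pow]
    gcongr
    simpa using Nat.norm_cast_le (α := 𝕜) ((p.1 + p.2).choose p.1)
  have hgeom := hasSum_geometric_of_norm_lt_one ((norm_add_le x y).trans_lt h)
  rw [sub_sub, hgeom.unique (((HasAntidiagonal.sigmaAntidiagonalEquivProd.hasSum_iff).2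
    hsum.hasSum).sigma (hasSum_antidiagonal_choose_mul_pow_mul_pow x y))]
  exact hsum.hasSum

end DoubleGeometric

theorem MeasureTheory.ae_summable_norm_of_summable_integral_norm {X E ι : Type*}
    [MeasurableSpace X] {μ : Measure X} [NormedAddCommGroup E] [Countable ι] {F : ι → X → E}
    (hF : ∀ i, Integrable (F i) μ) (hsum : Summable fun i => ∫ x, ‖F i x‖ ∂μ) :
    ∀ᵐ x ∂μ, Summable fun i => ‖F i x‖ := by
  refine summable_norm_of_tsum_eLpNorm_ne_top le_rfl (fun i => (hF i).1) ?_
  simp_rw [eLpNorm_one_eq_lintegral_enorm, ← ofReal_integral_norm_eq_lintegral_enorm (hF _)]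
  rw [← ENNReal.ofReal_tsum_of_nonneg (fun i => integral_nonneg fun x => norm_nonneg _) hsum]
  exact ENNReal.ofReal_ne_top

theorem integrableOn_rpow_sub_one_mul_exp_neg_mul {a s : ℝ} (ha : 0 < a) (hs : 0 < s) :
    IntegrableOn (fun t : ℝ => t ^ (a - 1) * exp (-(s * t))) (Set.Ioi 0) := by
  refine (integrableOn_rpow_mul_exp_neg_mul_rpow (s := a - 1) (by linarith) one_pos hs).congr_fun
    (fun t _ => ?_) measurableSet_Ioi
  simp only [rpow_one, neg_mul]

section TermwiseLaplace

variable {ι : Type*} {c e : ι → ℝ} {s : ℝ}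

theorem integral_norm_mul_rpow_mul_exp_neg_mul (i : ι) (hs : 0 < s) (he : 0 < e i) :
    ∫ t in Set.Ioi 0, ‖c i * (t ^ (e i - 1) * exp (-(s * t)))‖
      = |c i| * ((1 / s) ^ e i * Gamma (e i)) := by
  rw [← integral_rpow_mul_exp_neg_mul_Ioi he hs, ← integral_const_mul]
  refine setIntegral_congr_fun measurableSet_Ioi fun t (ht : 0 < t) => ?_
  rw [norm_mul, norm_mul, norm_of_nonneg (rpow_nonneg ht.le _), norm_of_nonneg (exp_pos _).le,
    norm_eq_abs]

variable [Countable ι]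

theorem ae_summable_mul_rpow_of_summable (hs : 0 < s) (he : ∀ i, 0 < e i)
    (hsum : Summable fun i => |c i| * ((1 / s) ^ e i * Gamma (e i))) :
    ∀ᵐ t ∂volume.restrict (Set.Ioi 0), Summable fun i => c i * t ^ (e i - 1) := by
  have hint i : IntegrableOn (fun t => c i * (t ^ (e i - 1) * exp (-(s * t)))) (Set.Ioi 0) :=
    (integrableOn_rpow_sub_one_mul_exp_neg_mul (he i) hs).const_mul (c i)
  filter_upwards [ae_summable_norm_of_summable_integral_norm hint
    (by simpa only [integral_norm_mul_rpow_mul_exp_neg_mul _ hs (he _)] using hsum)] with t ht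
  simpa only [← mul_assoc, mul_div_cancel_right₀ _ (exp_pos (-(s * t))).ne'] using
    ht.of_norm.div_const (exp (-(s * t)))

theorem integral_exp_neg_mul_tsum_mul_rpow (hs : 0 < s) (he : ∀ i, 0 < e i)
    (hsum : Summable fun i => |c i| * ((1 / s) ^ e i * Gamma (e i))) :
    ∫ t in Set.Ioi 0, exp (-(s * t)) * ∑' i, c i * t ^ (e i - 1)
      = ∑' i, c i * ((1 / s) ^ e i * Gamma (e i)) := by
  have hint i : IntegrableOn (fun t => c i * (t ^ (e i - 1) * exp (-(s * t)))) (Set.Ioi 0) :=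
    (integrableOn_rpow_sub_one_mul_exp_neg_mul (he i) hs).const_mul (c i)
  simp_rw [← integral_rpow_mul_exp_neg_mul_Ioi (he _) hs, ← integral_const_mul]
  rw [integral_tsum_of_summable_integral_norm hint
    (by simpa only [integral_norm_mul_rpow_mul_exp_neg_mul _ hs (he _)] using hsum)]
  congr 1 with t
  rw [← tsum_mul_left]
  congr 1 with i
  ring

end TermwiseLaplace

theorem ascPochhammer_eval_natCast_add_one (S : Type*) [Semiring S] (r n : ℕ) :
    (ascPochhammer S n).eval ((r : S) + 1) = n.factorial * ((r + n).choose r : S) := by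
  rw [← Nat.cast_add_one, ← ascPochhammer_eval_cast, ascPochhammer_nat_eq_ascFactorial,
    Nat.ascFactorial_eq_factorial_mul_choose, Nat.choose_symm_add]
  push_cast
  rfl

namespace PrabhakarSeries

def exponent (α β : ℝ) (p : ℕ × ℕ) : ℝ := (α - β) * p.1 + α + α * p.2

noncomputable def coeff (α β u v : ℝ) (p : ℕ × ℕ) : ℝ :=
  u ^ p.1 * v ^ p.2 * (p.1 + p.2).choose p.1 / Gamma (exponent α β p)

variable {α β : ℝ}

theorem exponent_pos (hα : 0 < α) (hβα : β ≤ α) (p : ℕ × ℕ) : 0 < exponent α β p := by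
  have : 0 ≤ (α - β) * p.1 + α * p.2 := by
    have := sub_nonneg.2 hβα
    positivity
  unfold exponent
  linarith

theorem abs_coeff (hα : 0 < α) (hβα : β ≤ α) (u v : ℝ) (p : ℕ × ℕ) :
    |coeff α β u v p| = coeff α β |u| |v| p := by
  simp only [coeff, abs_div, abs_mul, abs_pow, Nat.abs_cast,
    abs_of_pos (Gamma_pos_of_pos (exponent_pos hα hβα p))]

theorem tsum_coeff_mul_rpow (α β u v : ℝ) {t : ℝ} (ht : 0 < t) (r : ℕ) :
    ∑' n, coeff α β u v (r, n) * t ^ (exponent α β (r, n) - 1)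
      = u ^ r * t ^ ((α - β) * r + α - 1) *
          mittagLeffler3 α (α + (α - β) * r) (r + 1) (v * t ^ α) := by
  rw [mittagLeffler3, ← tsum_mul_left]
  congr 1 with n
  have hpow : t ^ (exponent α β (r, n) - 1) = t ^ ((α - β) * r + α - 1) * (t ^ α) ^ n := by
    rw [← rpow_natCast, ← rpow_mul ht.le, ← rpow_add ht, exponent]
    ring_nf
  have hgamma : (n : ℝ) * α + (α + (α - β) * r) = exponent α β (r, n) := by
    rw [exponent]
    ring
  rw [coeff, hpow, hgamma, ascPochhammer_eval_natCast_add_one]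
  field_simp
  ring

theorem coeff_mul_laplace (hα : 0 < α) (hβα : β ≤ α) (u v : ℝ) {s : ℝ} (hs : 0 < s)
    (p : ℕ × ℕ) :
    coeff α β u v p * ((1 / s) ^ exponent α β p * Gamma (exponent α β p))
      = (1 / s) ^ α * ((p.1 + p.2).choose p.1 * (u * (1 / s) ^ (α - β)) ^ p.1 *
          (v * (1 / s) ^ α) ^ p.2) := by
  have hs' : 0 < 1 / s := one_div_pos.2 hs
  have hpow : (1 / s) ^ exponent α β p
      = ((1 / s) ^ (α - β)) ^ p.1 * (1 / s) ^ α * ((1 / s) ^ α) ^ p.2 := by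
    rw [← rpow_natCast, ← rpow_natCast, ← rpow_mul hs'.le, ← rpow_mul hs'.le,
      ← rpow_add hs', ← rpow_add hs', exponent]
  have hgamma := (Gamma_pos_of_pos (exponent_pos hα hβα p)).ne'
  rw [coeff, hpow, mul_pow, mul_pow]
  field_simp

variable {u v s : ℝ}

theorem summable_abs_coeff_mul_laplace (hα : 0 < α) (hβα : β ≤ α) (hs : 0 < s)
    (hsmall : |u| * (1 / s) ^ (α - β) + |v| * (1 / s) ^ α < 1) :
    Summable fun p => |coeff α β u v p| *
      ((1 / s) ^ exponent α β p * Gamma (exponent α β p)) := by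
  simp_rw [abs_coeff hα hβα, coeff_mul_laplace hα hβα _ _ hs]
  exact (summable_choose_mul_pow_mul_pow_of_nonneg (by positivity) (by positivity) hsmall
    ).mul_left _

theorem ae_tsum_mittagLeffler3_eq_tsum_coeff (hα : 0 < α) (hβα : β ≤ α) (hs : 0 < s)
    (hsmall : |u| * (1 / s) ^ (α - β) + |v| * (1 / s) ^ α < 1) :
    ∀ᵐ t ∂volume.restrict (Set.Ioi 0),
      ∑' r : ℕ, u ^ r * t ^ ((α - β) * r + α - 1) *
          mittagLeffler3 α (α + (α - β) * r) (r + 1) (v * t ^ α)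
        = ∑' p, coeff α β u v p * t ^ (exponent α β p - 1) := by
  filter_upwards [ae_restrict_mem measurableSet_Ioi, ae_summable_mul_rpow_of_summable hs
    (exponent_pos hα hβα) (summable_abs_coeff_mul_laplace hα hβα hs hsmall)] with t ht hsum
  rw [hsum.tsum_prod' hsum.prod_factor]
  simp_rw [tsum_coeff_mul_rpow α β _ _ ht]

theorem integral_exp_neg_mul_tsum_mittagLeffler3 (hα : 0 < α) (hβα : β ≤ α) (hs : 0 < s)
    (hsmall : |u| * (1 / s) ^ (α - β) + |v| * (1 / s) ^ α < 1) :
    ∫ t in Set.Ioi 0, exp (-(s * t)) *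
        ∑' r : ℕ, u ^ r * t ^ ((α - β) * r + α - 1) *
          mittagLeffler3 α (α + (α - β) * r) (r + 1) (v * t ^ α)
      = (1 / s) ^ α * (1 - u * (1 / s) ^ (α - β) - v * (1 / s) ^ α)⁻¹ := by
  have hnorm : ‖u * (1 / s) ^ (α - β)‖ + ‖v * (1 / s) ^ α‖ < 1 := by
    simpa only [norm_mul, norm_eq_abs, abs_of_nonneg (rpow_nonneg (one_div_pos.2 hs).le _)]
      using hsmall
  rw [integral_congr_ae ((ae_tsum_mittagLeffler3_eq_tsum_coeff hα hβα hs hsmall).mono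
      fun t ht => congrArg _ ht),
    integral_exp_neg_mul_tsum_mul_rpow hs (exponent_pos hα hβα)
      (summable_abs_coeff_mul_laplace hα hβα hs hsmall)]
  simp_rw [coeff_mul_laplace hα hβα _ _ hs]
  rw [tsum_mul_left, (hasSum_choose_mul_pow_mul_pow hnorm).tsum_eq]

end PrabhakarSeries

theorem laplace_series_mittagLeffler3 (α β lam b s : ℝ)
    (hβ : 0 < β) (hαβ : β < α) (hlam : 0 ≤ lam) (hb : 0 ≤ b)
    (hs : 0 < s) (hbig : lam * s ^ β + b < s ^ α) :
    ∫ t in Set.Ioi (0 : ℝ),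
      Real.exp (-(s * t)) *
        (∑' r : ℕ, (-lam) ^ r * t ^ ((α - β) * r + α - 1) *
          mittagLeffler3 α (α + (α - β) * r) (r + 1) (-b * t ^ α))
      = 1 / (s ^ α + lam * s ^ β + b) := by
  have hrpow_sub : (1 / s) ^ (α - β) = s ^ β / s ^ α := by
    rw [one_div, inv_rpow hs.le, rpow_sub hs, inv_div]
  have hrpow : (1 / s) ^ α = (s ^ α)⁻¹ := by rw [one_div, inv_rpow hs.le]
  have hsmall : |-lam| * (1 / s) ^ (α - β) + |-b| * (1 / s) ^ α < 1 := by
    rw [← div_lt_one (rpow_pos_of_pos hs α)] at hbig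
    rwa [abs_neg, abs_neg, abs_of_nonneg hlam, abs_of_nonneg hb, hrpow_sub, hrpow,
      mul_div_assoc', ← div_eq_mul_inv, ← add_div]
  rw [PrabhakarSeries.integral_exp_neg_mul_tsum_mittagLeffler3 (hβ.trans hαβ) hαβ.le hs hsmall,
    hrpow_sub, hrpow, ← mul_inv, one_div]
  congr 1
  field_simp
  ring
end

section
/- For α ∈ (0,1], t > 0, and b ≥ 0, the two-parameter Mittag-Leffler solution N(t) = t^{α−1} E_{α,α}(−b t^α) satisfies the integral equation N(t) = t^{α−1}/Γ(α) − b·(I^α N)(t), where I^α is the Riemann–Liouville fractional integral. -/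
open MeasureTheory Real Set

-- log-convexity consequence: Γ(y+α) ≥ (y+α-1)^α Γ(y)
lemma gamma_ratio_lb {α y : ℝ} (hα : 0 < α) (hα1 : α ≤ 1) (hy : 0 < y + α - 1) :
    (y + α - 1) ^ α * Real.Gamma y ≤ Real.Gamma (y + α) := by
  have hy0 : 0 < y := by linarith
  have hb : 0 < y + α := by linarith
  have h0a : (0:ℝ) ≤ α := hα.le
  have h0b : (0:ℝ) ≤ 1 - α := by linarith
  have hab : α + (1 - α) = 1 := by ring
  have hconv := Real.convexOn_log_Gamma.2 (Set.mem_Ioi.2 hy) (Set.mem_Ioi.2 hb) h0a h0b hab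
  rw [show α • (y + α - 1) + (1 - α) • (y + α) = y by simp [smul_eq_mul]; ring] at hconv
  have hrec : Real.Gamma (y + α) = (y + α - 1) * Real.Gamma (y + α - 1) := by
    have := Real.Gamma_add_one hy.ne'
    rw [show y + α - 1 + 1 = y + α by ring] at this
    exact this
  have hGpos : 0 < Real.Gamma (y + α - 1) := Real.Gamma_pos_of_pos hy
  have hGy : 0 < Real.Gamma y := Real.Gamma_pos_of_pos hy0
  have hGb : 0 < Real.Gamma (y + α) := Real.Gamma_pos_of_pos hb
  simp only [Function.comp, smul_eq_mul] at hconv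
  -- log Γ y ≤ α log Γ(y+α-1) + (1-α) log Γ(y+α)
  have hlogrec : Real.log (Real.Gamma (y + α - 1)) =
      Real.log (Real.Gamma (y + α)) - Real.log (y + α - 1) := by
    rw [hrec, Real.log_mul hy.ne' hGpos.ne']; ring
  rw [hlogrec] at hconv
  have key : Real.log ((y + α - 1) ^ α * Real.Gamma y) ≤ Real.log (Real.Gamma (y + α)) := by
    rw [Real.log_mul (by positivity) hGy.ne', Real.log_rpow hy]
    nlinarith [hconv]
  have := Real.exp_le_exp.2 key
  rwa [Real.exp_log (by positivity), Real.exp_log hGb] at this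

lemma summable_ml {α x β : ℝ} (hα : 0 < α) (hα1 : α ≤ 1) (hx : 0 ≤ x) (hβ : 0 < β) :
    Summable (fun n : ℕ => x ^ n / Real.Gamma (n * α + β)) := by
  set M : ℝ := max 1 ((2 * x + 1) ^ α⁻¹) with hM
  obtain ⟨n₀, hn₀⟩ := exists_nat_ge ((M + 1 - β) / α)
  refine summable_of_ratio_norm_eventually_le (r := 1 / 2) (by norm_num) ?_
  filter_upwards [Filter.eventually_ge_atTop n₀] with n hn
  set y : ℝ := n * α + β with hy
  have hyM : M ≤ y + α - 1 := by
    have h1 : (M + 1 - β) / α ≤ (n : ℝ) := le_trans hn₀ (by exact_mod_cast hn)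
    have := (div_le_iff₀ hα).mp h1
    nlinarith [this]
  have hy1 : 0 < y + α - 1 := lt_of_lt_of_le (lt_of_lt_of_le one_pos (le_max_left _ _)) hyM
  have hy0 : 0 < y := by linarith
  have hpow : 2 * x + 1 ≤ (y + α - 1) ^ α := by
    calc 2 * x + 1 = ((2 * x + 1) ^ α⁻¹) ^ α := by
          rw [← Real.rpow_mul (by positivity), inv_mul_cancel₀ hα.ne', Real.rpow_one]
      _ ≤ (y + α - 1) ^ α := by
          apply Real.rpow_le_rpow (by positivity) (le_trans (le_max_right _ _) hyM) hα.le
  have hΓy : 0 < Real.Gamma y := Real.Gamma_pos_of_pos hy0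
  have hΓ2 : 0 < Real.Gamma (y + α) := Real.Gamma_pos_of_pos (by linarith)
  have key : (2 * x + 1) * Real.Gamma y ≤ Real.Gamma (y + α) :=
    le_trans (mul_le_mul_of_nonneg_right hpow hΓy.le) (gamma_ratio_lb hα hα1 hy1)
  have harg : ((n : ℝ) + 1) * α + β = y + α := by rw [hy]; ring
  rw [Real.norm_eq_abs, Real.norm_eq_abs, abs_div, abs_div, abs_pow, abs_pow,
    abs_of_nonneg hx]
  rw [show ((n + 1 : ℕ) : ℝ) * α + β = y + α by push_cast; rw [hy]; ring,
    abs_of_pos hΓ2, abs_of_pos hΓy]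
  have e1 : x ^ (n + 1) / Real.Gamma (y + α) ≤ x ^ (n + 1) / ((2 * x + 1) * Real.Gamma y) := by
    gcongr
  refine e1.trans ?_
  rw [show x ^ (n + 1) / ((2 * x + 1) * Real.Gamma y) = (x / (2 * x + 1)) * (x ^ n / Real.Gamma y)
    by rw [pow_succ]; field_simp]
  apply mul_le_mul_of_nonneg_right _ (by positivity)
  rw [div_le_div_iff₀ (by linarith) (by norm_num)]
  linarith

lemma betaIntegrable {p q t : ℝ} (hp : 0 < p) (hq : 0 < q) (ht : 0 < t) :
    IntervalIntegrable (fun s => s ^ (p - 1) * (t - s) ^ (q - 1)) volume 0 t := by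
  apply IntervalIntegrable.trans (b := t / 2)
  · apply IntervalIntegrable.mul_continuousOn
      (intervalIntegral.intervalIntegrable_rpow' (by linarith))
    intro s hs
    rw [Set.uIcc_of_le (by linarith), Set.mem_Icc] at hs
    exact (((continuous_const.sub continuous_id).continuousAt).rpow_const
      (Or.inl (by simp only [Pi.sub_apply, id]; intro h; nlinarith [hs.2]))).continuousWithinAt
  · apply IntervalIntegrable.continuousOn_mul
      (f := fun s => (t - s) ^ (q - 1)) (g := fun s => s ^ (p - 1))
    · have h := (intervalIntegral.intervalIntegrable_rpow'
        (a := 0) (b := t / 2) (r := q - 1) (by linarith)).comp_sub_left t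
      rw [show t - t / 2 = t / 2 by ring, sub_zero] at h
      exact h.symm
    · intro s hs
      rw [Set.uIcc_of_le (by linarith)] at hs
      exact (Real.continuousAt_rpow_const _ _
        (Or.inl (by nlinarith [hs.1]))).continuousWithinAt

lemma betaEval {p q t : ℝ} (hp : 0 < p) (hq : 0 < q) (ht : 0 < t) :
    ∫ s in (0:ℝ)..t, s ^ (p - 1) * (t - s) ^ (q - 1)
      = Real.Gamma p * Real.Gamma q / Real.Gamma (p + q) * t ^ (p + q - 1) := by
  have hΓ : (0:ℝ) < Real.Gamma (p + q) := Real.Gamma_pos_of_pos (by linarith)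
  have hG := Complex.Gamma_mul_Gamma_eq_betaIntegral (s := (p:ℂ)) (t := (q:ℂ))
    (by simpa using hp) (by simpa using hq)
  have hbeta : Complex.betaIntegral p q
      = ((Real.Gamma p * Real.Gamma q / Real.Gamma (p + q) : ℝ) : ℂ) := by
    have h1 : ((p:ℂ) + q) = ((p + q : ℝ) : ℂ) := by push_cast; ring
    rw [h1] at hG
    have hne : Complex.Gamma ((p + q : ℝ) : ℂ) ≠ 0 := by
      rw [Complex.Gamma_ofReal]; exact_mod_cast hΓ.ne'
    have h2 : Complex.betaIntegral p q
        = Complex.Gamma p * Complex.Gamma q / Complex.Gamma ((p + q : ℝ) : ℂ) := by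
      rw [eq_div_iff hne, mul_comm]; exact hG.symm
    rw [h2, Complex.Gamma_ofReal, Complex.Gamma_ofReal, Complex.Gamma_ofReal]
    push_cast
    ring
  have hC := Complex.betaIntegral_scaled (p:ℂ) (q:ℂ) ht
  have hkey : (((∫ s in (0:ℝ)..t, s ^ (p - 1) * (t - s) ^ (q - 1)) : ℝ) : ℂ)
      = ((Real.Gamma p * Real.Gamma q / Real.Gamma (p + q) * t ^ (p + q - 1) : ℝ) : ℂ) := by
    rw [← intervalIntegral.integral_ofReal]
    have : ∫ s in (0:ℝ)..t, ((s ^ (p - 1) * (t - s) ^ (q - 1) : ℝ) : ℂ)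
        = ∫ s in (0:ℝ)..t, (s : ℂ) ^ ((p:ℂ) - 1) * ((t : ℂ) - s) ^ ((q:ℂ) - 1) := by
      rw [intervalIntegral.integral_of_le ht.le, intervalIntegral.integral_of_le ht.le]
      apply setIntegral_congr_fun measurableSet_Ioc
      intro s hs
      dsimp only
      rw [Complex.ofReal_mul, Complex.ofReal_cpow hs.1.le,
        Complex.ofReal_cpow (by linarith [hs.2] : (0:ℝ) ≤ t - s)]
      push_cast
      ring
    rw [this, hC, hbeta, Complex.ofReal_mul, Complex.ofReal_cpow ht.le]
    push_cast
    ring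
  exact_mod_cast hkey

theorem mittagLeffler_integral_equation (α b t : ℝ)
    (hα : 0 < α) (hα1 : α ≤ 1) (ht : 0 < t) (hb : 0 ≤ b) :
    let N : ℝ → ℝ := fun s => s ^ (α - 1) * mittagLeffler α α (-b * s ^ α)
    N t = t ^ (α - 1) / Real.Gamma α - b * rlIntegral α N t := by
  intro N
  have hΓα : 0 < Real.Gamma α := Real.Gamma_pos_of_pos hα
  set F : ℕ → ℝ := fun n => (-b) ^ n * t ^ ((n : ℝ) * α + α - 1) / Real.Gamma ((n : ℝ) * α + α)
    with hF
  set A : ℕ → ℝ := fun n =>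
      (-b) ^ n * t ^ ((n : ℝ) * α + 2 * α - 1) / Real.Gamma ((n : ℝ) * α + 2 * α) with hA
  set G : ℕ → ℝ → ℝ := fun n s =>
      (t - s) ^ (α - 1) * ((-b) ^ n * s ^ ((n : ℝ) * α + α - 1) / Real.Gamma ((n : ℝ) * α + α))
    with hG
  -- series representation of N
  have hrep : ∀ s : ℝ, 0 < s →
      N s = ∑' n : ℕ, (-b) ^ n * s ^ ((n : ℝ) * α + α - 1) / Real.Gamma ((n : ℝ) * α + α) := by
    intro s hs
    show s ^ (α - 1) * mittagLeffler α α (-b * s ^ α) = _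
    rw [mittagLeffler, ← tsum_mul_left]
    apply tsum_congr
    intro n
    rw [mul_pow, ← Real.rpow_natCast (s ^ α) n, ← Real.rpow_mul hs.le]
    calc s ^ (α - 1) * ((-b) ^ n * s ^ (α * (n : ℝ)) / Real.Gamma ((n : ℝ) * α + α))
        = (-b) ^ n * (s ^ (α - 1) * s ^ (α * (n : ℝ))) / Real.Gamma ((n : ℝ) * α + α) := by ring
      _ = _ := by
          rw [← Real.rpow_add hs, show α - 1 + α * (n : ℝ) = (n : ℝ) * α + α - 1 by ring]
  -- integrability of each term
  have hGint : ∀ n : ℕ, IntegrableOn (G n) (Set.Ioc 0 t) := by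
    intro n
    have hp : (0 : ℝ) < (n : ℝ) * α + α := by positivity
    have hbi := (betaIntegrable (p := (n : ℝ) * α + α) (q := α) hp hα ht).1
    have : G n = fun s => ((-b) ^ n / Real.Gamma ((n : ℝ) * α + α)) *
        (s ^ ((n : ℝ) * α + α - 1) * (t - s) ^ (α - 1)) := by
      funext s; simp only [hG]; ring
    rw [this]
    exact hbi.const_mul _
  -- the norm integrals
  have hnorm : ∀ n : ℕ, ∫ s in Set.Ioc (0:ℝ) t, ‖G n s‖ =
      (Real.Gamma α * t ^ (2 * α - 1)) * ((b * t ^ α) ^ n / Real.Gamma ((n : ℝ) * α + 2 * α)) := by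
    intro n
    have hΓn : 0 < Real.Gamma ((n : ℝ) * α + α) := Real.Gamma_pos_of_pos (by positivity)
    have h1 : ∫ s in Set.Ioc (0:ℝ) t, ‖G n s‖ =
        ∫ s in Set.Ioc (0:ℝ) t, (b ^ n / Real.Gamma ((n : ℝ) * α + α)) *
          (s ^ ((n : ℝ) * α + α - 1) * (t - s) ^ (α - 1)) := by
      apply setIntegral_congr_fun measurableSet_Ioc
      intro s hs
      simp only [hG, Real.norm_eq_abs]
      rw [abs_mul, abs_div, abs_mul, abs_pow, abs_neg, abs_of_nonneg hb,
        abs_of_nonneg (Real.rpow_nonneg (sub_nonneg.2 hs.2) _),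
        abs_of_nonneg (Real.rpow_nonneg hs.1.le _), abs_of_pos hΓn]
      ring
    rw [h1, MeasureTheory.integral_const_mul, ← intervalIntegral.integral_of_le ht.le,
      betaEval (by positivity) hα ht]
    rw [show (n : ℝ) * α + α + α = (n : ℝ) * α + 2 * α by ring]
    have hΓ2 : 0 < Real.Gamma ((n : ℝ) * α + 2 * α) := Real.Gamma_pos_of_pos (by positivity)
    rw [mul_pow, ← Real.rpow_natCast (t ^ α) n, ← Real.rpow_mul ht.le,
      show t ^ ((n : ℝ) * α + 2 * α - 1) = t ^ (α * (n : ℝ)) * t ^ (2 * α - 1) by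
        rw [← Real.rpow_add ht]; ring_nf]
    field_simp
  -- summability of norm integrals
  have hsum : Summable (fun n => ∫ s in Set.Ioc (0:ℝ) t, ‖G n s‖) := by
    simp only [hnorm]
    exact (summable_ml hα hα1 (by positivity : (0:ℝ) ≤ b * t ^ α)
      (by linarith : (0:ℝ) < 2 * α)).mul_left _
  have hint := MeasureTheory.hasSum_integral_of_summable_integral_norm
    (μ := volume.restrict (Set.Ioc (0:ℝ) t)) (F := G) hGint hsum
  have hIeq : ∫ s in Set.Ioc (0:ℝ) t, (∑' n, G n s)
      = ∫ s in Set.Ioc (0:ℝ) t, (t - s) ^ (α - 1) * N s := by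
    apply setIntegral_congr_fun measurableSet_Ioc
    intro s hs
    dsimp only
    rw [hrep s hs.1, ← tsum_mul_left]
  have hGval : ∀ n : ℕ, ∫ s in Set.Ioc (0:ℝ) t, G n s = Real.Gamma α * A n := by
    intro n
    have hΓn : 0 < Real.Gamma ((n : ℝ) * α + α) := Real.Gamma_pos_of_pos (by positivity)
    have hΓ2 : 0 < Real.Gamma ((n : ℝ) * α + 2 * α) := Real.Gamma_pos_of_pos (by positivity)
    have h2 : ∫ s in Set.Ioc (0:ℝ) t, G n s
        = ((-b) ^ n / Real.Gamma ((n : ℝ) * α + α)) *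
          ∫ s in Set.Ioc (0:ℝ) t, s ^ ((n : ℝ) * α + α - 1) * (t - s) ^ (α - 1) := by
      rw [← MeasureTheory.integral_const_mul]
      apply setIntegral_congr_fun measurableSet_Ioc
      intro s _
      simp only [hG]; ring
    rw [h2, ← intervalIntegral.integral_of_le ht.le, betaEval (by positivity) hα ht,
      show (n : ℝ) * α + α + α = (n : ℝ) * α + 2 * α by ring, hA]
    field_simp
  have hS : ∫ s in Set.Ioc (0:ℝ) t, (t - s) ^ (α - 1) * N s
      = Real.Gamma α * ∑' n, A n := by
    calc ∫ s in Set.Ioc (0:ℝ) t, (t - s) ^ (α - 1) * N s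
        = ∑' n, ∫ s in Set.Ioc (0:ℝ) t, G n s := by rw [← hIeq, ← hint.tsum_eq]
      _ = ∑' n, Real.Gamma α * A n := tsum_congr hGval
      _ = Real.Gamma α * ∑' n, A n := tsum_mul_left
  have hrl : rlIntegral α N t = ∑' n, A n := by
    rw [rlIntegral, intervalIntegral.integral_of_le ht.le, hS]
    field_simp
  -- summability of F
  have hFsum : Summable F := by
    apply Summable.of_abs
    have habs : (fun n : ℕ => |F n|)
        = fun n : ℕ => t ^ (α - 1) * ((b * t ^ α) ^ n / Real.Gamma ((n : ℝ) * α + α)) := by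
      funext n
      have hΓn : 0 < Real.Gamma ((n : ℝ) * α + α) := Real.Gamma_pos_of_pos (by positivity)
      simp only [hF]
      rw [abs_div, abs_mul, abs_pow, abs_neg, abs_of_nonneg hb,
        abs_of_nonneg (Real.rpow_nonneg ht.le _), abs_of_pos hΓn,
        mul_pow, ← Real.rpow_natCast (t ^ α) n, ← Real.rpow_mul ht.le,
        show t ^ ((n : ℝ) * α + α - 1) = t ^ (α * (n : ℝ)) * t ^ (α - 1) by
          rw [← Real.rpow_add ht]; ring_nf]
      ring
    rw [habs]
    exact (summable_ml hα hα1 (by positivity : (0:ℝ) ≤ b * t ^ α) hα).mul_left _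
  have hNt : N t = ∑' n, F n := hrep t ht
  have hF0 : F 0 = t ^ (α - 1) / Real.Gamma α := by
    simp only [hF]
    norm_num
  have hFs : ∀ n : ℕ, F (n + 1) = -b * A n := by
    intro n
    simp only [hF, hA]
    push_cast
    rw [show ((n : ℝ) + 1) * α + α - 1 = (n : ℝ) * α + 2 * α - 1 by ring,
      show ((n : ℝ) + 1) * α + α = (n : ℝ) * α + 2 * α by ring, pow_succ]
    ring
  rw [hNt, Summable.tsum_eq_zero_add hFsum, hF0]
  calc t ^ (α - 1) / Real.Gamma α + ∑' n, F (n + 1)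
      = t ^ (α - 1) / Real.Gamma α + ∑' n : ℕ, -b * A n := by
        congr 1; exact tsum_congr hFs
    _ = t ^ (α - 1) / Real.Gamma α + -b * ∑' n, A n := by rw [tsum_mul_left]
    _ = t ^ (α - 1) / Real.Gamma α - b * rlIntegral α N t := by rw [hrl]; ring
end
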